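/- arXiv:1510.04814 — 4 statements merged into one kernel-verified Lean document; each statement's English description precedes it below -/
import Mathlib

section
/- For any graph G on n vertices, the bipartition number τ(G) (the minimum number of complete bipartite subgraphs of G whose edge sets partition the edge set of G) satisfies τ(G) ≤ n − α(G), where α(G) is the independence number of G. -/
open Finset in
/-- The bipartition number of a graph `G` on `n` vertices is at most `n - α(G)`:
there is a partition of the edge set of `G` into at most `n - α(G)` complete
bipartite subgraphs. -/
theorem bipartition_number_le_sub_indepNum (n : ℕ) (G : SimpleGraph (Fin n))
    [DecidableRel G.Adj] :
    ∃ (k : ℕ) (A B : Fin k → Finset (Fin n)),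
      k ≤ n - ((Finset.univ.powerset.filter
          (fun S : Finset (Fin n) => ∀ u ∈ S, ∀ v ∈ S, ¬ G.Adj u v)).sup Finset.card) ∧
      (∀ i, Disjoint (A i) (B i)) ∧
      (∀ i, ∀ a ∈ A i, ∀ b ∈ B i, G.Adj a b) ∧
      (∀ u v, G.Adj u v →
        ∃! i, (u ∈ A i ∧ v ∈ B i) ∨ (v ∈ A i ∧ u ∈ B i)) := by
  classical
  obtain ⟨S, hSmem, hSsup⟩ :=
    Finset.exists_mem_eq_sup
      (Finset.univ.powerset.filter
        (fun S : Finset (Fin n) => ∀ u ∈ S, ∀ v ∈ S, ¬ G.Adj u v))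
      ⟨∅, by simp⟩ Finset.card
  have hSind : ∀ u ∈ S, ∀ v ∈ S, ¬ G.Adj u v := (Finset.mem_filter.1 hSmem).2
  set T : Finset (Fin n) := Finset.univ \ S with hT
  set k := T.card with hk
  let e := T.orderIsoOfFin rfl
  let f : Fin k → Fin n := fun i => (e i : Fin n)
  have hfT : ∀ i, f i ∈ T := fun i => (e i).2
  have hfinj : Function.Injective f := fun i j h => by
    have := e.injective (Subtype.ext h); exact this
  have hfsurj : ∀ t ∈ T, ∃ i, f i = t := fun t ht => by
    obtain ⟨i, hi⟩ := e.surjective ⟨t, ht⟩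
    exact ⟨i, congrArg Subtype.val hi⟩
  have hfnS : ∀ i, f i ∉ S := fun i => (Finset.mem_sdiff.1 (hfT i)).2
  refine ⟨k, fun i => {f i},
      fun i => (G.neighborFinset (f i)).filter (fun w => w ∈ S ∨ f i < w),
      ?_, ?_, ?_, ?_⟩
  · rw [hk, hT, Finset.card_sdiff_of_subset (Finset.subset_univ S), Finset.card_univ,
      Fintype.card_fin, ← hSsup]
  · intro i
    simp only [Finset.disjoint_singleton_left, Finset.mem_filter,
      SimpleGraph.mem_neighborFinset]
    intro h
    exact G.irrefl h.1
  · intro i a ha b hb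
    rw [Finset.mem_singleton] at ha
    rw [Finset.mem_filter, SimpleGraph.mem_neighborFinset] at hb
    exact ha ▸ hb.1
  · intro u v huv
    have hmem : ∀ j : Fin k, ∀ x y : Fin n, G.Adj x y →
        ((x ∈ ({f j} : Finset (Fin n)) ∧
          y ∈ (G.neighborFinset (f j)).filter (fun w => w ∈ S ∨ f j < w)) ↔
        (f j = x ∧ (y ∈ S ∨ x < y))) := by
      intro j x y hxy
      simp only [Finset.mem_singleton, Finset.mem_filter,
        SimpleGraph.mem_neighborFinset]
      constructor
      · rintro ⟨h1, h2, h3⟩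
        exact ⟨h1.symm, by rw [h1]; exact h3⟩
      · rintro ⟨h1, h2⟩
        exact ⟨h1.symm, h1 ▸ hxy, h1 ▸ h2⟩
    by_cases huS : u ∈ S
    · by_cases hvS : v ∈ S
      · exact absurd huv (hSind u huS v hvS)
      · -- v ∈ T, star at v, u ∈ S
        obtain ⟨i, hi⟩ := hfsurj v (Finset.mem_sdiff.2 ⟨Finset.mem_univ v, hvS⟩)
        refine ⟨i, Or.inr ((hmem i v u huv.symm).2 ⟨hi, Or.inl huS⟩), ?_⟩
        rintro j (hj | hj)
        · rw [hmem j u v huv] at hj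
          exact absurd (hj.1 ▸ hfnS j) (not_not.2 huS)
        · rw [hmem j v u huv.symm] at hj
          exact hfinj (hj.1.trans hi.symm)
    · by_cases hvS : v ∈ S
      · obtain ⟨i, hi⟩ := hfsurj u (Finset.mem_sdiff.2 ⟨Finset.mem_univ u, huS⟩)
        refine ⟨i, Or.inl ((hmem i u v huv).2 ⟨hi, Or.inl hvS⟩), ?_⟩
        rintro j (hj | hj)
        · rw [hmem j u v huv] at hj
          exact hfinj (hj.1.trans hi.symm)
        · rw [hmem j v u huv.symm] at hj
          exact absurd (hj.1 ▸ hfnS j) (not_not.2 hvS)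
      · obtain ⟨i, hi⟩ := hfsurj u (Finset.mem_sdiff.2 ⟨Finset.mem_univ u, huS⟩)
        obtain ⟨i', hi'⟩ := hfsurj v (Finset.mem_sdiff.2 ⟨Finset.mem_univ v, hvS⟩)
        rcases lt_or_gt_of_ne (G.ne_of_adj huv) with hlt | hgt
        · refine ⟨i, Or.inl ((hmem i u v huv).2 ⟨hi, Or.inr hlt⟩), ?_⟩
          rintro j (hj | hj)
          · rw [hmem j u v huv] at hj
            exact hfinj (hj.1.trans hi.symm)
          · rw [hmem j v u huv.symm] at hj
            rcases hj.2 with h | h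
            · exact absurd h huS
            · exact absurd hlt (not_lt.2 h.le)
        · refine ⟨i', Or.inr ((hmem i' v u huv.symm).2 ⟨hi', Or.inr hgt⟩), ?_⟩
          rintro j (hj | hj)
          · rw [hmem j u v huv] at hj
            rcases hj.2 with h | h
            · exact absurd h hvS
            · exact absurd hgt (not_lt.2 h.le)
          · rw [hmem j v u huv.symm] at hj
            exact hfinj (hj.1.trans hi'.symm)
end

section
/- Let G' be an (r−1)-uniform hypergraph on vertex set [n] such that every r-element subset of [n] contains at least one edge of G'. Then for any r-uniform hypergraph H on [n], the edge set of H can be partitioned into at most |E(G')| complete r-partite r-uniform subhypergraphs of H. -/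
/-- If `G'` is an `(r-1)`-uniform hypergraph on `[n]` such that every `r`-subset of `[n]`
contains an edge of `G'`, then the edge set of any `r`-uniform hypergraph `H` on `[n]`
can be partitioned into at most `|E(G')|` complete `r`-partite `r`-uniform
subhypergraphs of `H`. -/
theorem decomposition_from_covering_design (n r : ℕ)
    (G' : Finset (Finset (Fin n))) (hG' : ∀ e ∈ G', e.card = r - 1)
    (hcov : ∀ F : Finset (Fin n), F.card = r → ∃ e ∈ G', e ⊆ F)
    (H : Finset (Finset (Fin n))) (hH : ∀ F ∈ H, F.card = r) :
    ∃ (k : ℕ) (A : Fin k → Fin r → Finset (Fin n)),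
      k ≤ G'.card ∧
      (∀ i, ∀ j₁ j₂ : Fin r, j₁ ≠ j₂ → Disjoint (A i j₁) (A i j₂)) ∧
      (∀ i, ∀ F : Finset (Fin n), F.card = r →
        (∀ j, (F ∩ A i j).card = 1) → F ∈ H) ∧
      (∀ F ∈ H, ∃! i, ∀ j, (F ∩ A i j).card = 1) := by
  classical
  rcases Nat.eq_zero_or_pos r with hr | hr
  · -- degenerate case r = 0
    subst hr
    by_cases hHe : H = ∅
    · exact ⟨0, fun i => Fin.elim0 i, Nat.zero_le _, fun i => i.elim0,
        fun i => i.elim0, by simp [hHe]⟩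
    · obtain ⟨F₀, hF₀⟩ := Finset.nonempty_iff_ne_empty.mpr hHe
      have hF₀e : F₀ = ∅ := Finset.card_eq_zero.mp (hH F₀ hF₀)
      have h1 : (1 : ℕ) ≤ G'.card := by
        obtain ⟨e, he, _⟩ := hcov ∅ (by simp)
        exact Finset.card_pos.mpr ⟨e, he⟩
      refine ⟨1, fun _ j => j.elim0, h1, fun i j => j.elim0, ?_, ?_⟩
      · intro i F hF _
        have : F = ∅ := Finset.card_eq_zero.mp hF
        rw [this]; rw [hF₀e] at hF₀; exact hF₀
      · intro F hF
        exact ⟨0, fun j => j.elim0, fun i _ => Subsingleton.elim i 0⟩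
  -- main case r ≥ 1
  set k := G'.card with hk
  let E : Fin k → Finset (Fin n) := fun i => (G'.equivFin.symm i : Finset (Fin n))
  have hE : ∀ i, E i ∈ G' := fun i => (G'.equivFin.symm i).2
  have hEinj : Function.Injective E :=
    Subtype.coe_injective.comp G'.equivFin.symm.injective
  have hEcard : ∀ i, (E i).card = r - 1 := fun i => hG' _ (hE i)
  -- choice of a covering edge for each F
  let ch : Finset (Fin n) → Finset (Fin n) := fun F =>
    if h : F.card = r then (hcov F h).choose else ∅
  have hch : ∀ F : Finset (Fin n), F.card = r → ch F ∈ G' ∧ ch F ⊆ F := by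
    intro F h
    have := (hcov F h).choose_spec
    simpa [ch, h] using this
  -- enumeration of the elements of E i
  let m : ∀ i : Fin k, Fin (r - 1) ≃o {x // x ∈ E i} := fun i =>
    (E i).orderIsoOfFin (hEcard i)
  let S : Fin k → Finset (Fin n) := fun i =>
    Finset.univ.filter (fun v => v ∉ E i ∧ insert v (E i) ∈ H ∧ ch (insert v (E i)) = E i)
  let A : Fin k → Fin r → Finset (Fin n) := fun i j =>
    if h : (j : ℕ) < r - 1 then {((m i) ⟨j, h⟩ : Fin n)} else S i
  have hmem : ∀ i (j : Fin (r - 1)), ((m i) j : Fin n) ∈ E i := fun i j => ((m i) j).2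
  have hSnot : ∀ i, ∀ v ∈ S i, v ∉ E i := by
    intro i v hv
    exact ((Finset.mem_filter.mp hv).2).1
  -- key lemma: forward direction
  have key : ∀ (i : Fin k) (F : Finset (Fin n)), F.card = r →
      (∀ j : Fin r, (F ∩ A i j).card = 1) → F ∈ H ∧ ch F = E i := by
    intro i F hFc hA
    have hsub : E i ⊆ F := by
      intro x hx
      obtain ⟨j, hj⟩ := (m i).surjective ⟨x, hx⟩
      have hjlt : (j : ℕ) < r - 1 := j.2
      have hjr : (j : ℕ) < r := lt_of_lt_of_le hjlt (Nat.sub_le r 1)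
      have hA' := hA ⟨(j : ℕ), hjr⟩
      have hAval : A i ⟨(j : ℕ), hjr⟩ = {((m i) j : Fin n)} := by
        simp only [A, dif_pos hjlt]
      rw [hAval] at hA'
      obtain ⟨y, hy⟩ := Finset.card_eq_one.mp hA'
      have : y ∈ F ∩ {((m i) j : Fin n)} := hy ▸ Finset.mem_singleton_self y
      have hy2 := Finset.mem_inter.mp this
      have : ((m i) j : Fin n) ∈ F := by
        rcases Finset.mem_singleton.mp hy2.2 with h
        exact h ▸ hy2.1
      rw [hj] at this
      exact this
    have hlast : ((⟨r - 1, Nat.sub_lt hr one_pos⟩ : Fin r) : ℕ) = r - 1 := rfl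
    have hA' := hA ⟨r - 1, Nat.sub_lt hr one_pos⟩
    have hAval : A i ⟨r - 1, Nat.sub_lt hr one_pos⟩ = S i := by
      simp [A]
    rw [hAval] at hA'
    obtain ⟨v, hv⟩ := Finset.card_eq_one.mp hA'
    have hvmem : v ∈ F ∩ S i := hv ▸ Finset.mem_singleton_self v
    have hvF : v ∈ F := (Finset.mem_inter.mp hvmem).1
    have hvS := Finset.mem_filter.mp (Finset.mem_inter.mp hvmem).2
    obtain ⟨-, hvne, hvH, hvch⟩ := hvS
    have hins : insert v (E i) ⊆ F := Finset.insert_subset hvF hsub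
    have hcins : (insert v (E i)).card = r := by
      rw [Finset.card_insert_of_notMem hvne, hEcard i]; omega
    have hFeq : F = insert v (E i) := by
      apply (Finset.eq_of_subset_of_card_le hins (by rw [hcins, hFc])).symm
    rw [hFeq]
    exact ⟨hvH, hvch⟩
  refine ⟨k, A, le_refl _, ?_, ?_, ?_⟩
  · -- disjointness
    intro i j₁ j₂ hne
    by_cases h1 : (j₁ : ℕ) < r - 1 <;> by_cases h2 : (j₂ : ℕ) < r - 1
    · simp only [A, dif_pos h1, dif_pos h2]
      rw [Finset.disjoint_singleton]
      intro heq
      have h' := (m i).injective (Subtype.ext heq)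
      have hval := congrArg Fin.val h'
      exact hne (Fin.ext hval)
    · simp only [A, dif_pos h1, dif_neg h2]
      rw [Finset.disjoint_singleton_left]
      intro hmem'
      exact hSnot i _ hmem' (hmem i _)
    · simp only [A, dif_neg h1, dif_pos h2]
      rw [Finset.disjoint_singleton_right]
      intro hmem'
      exact hSnot i _ hmem' (hmem i _)
    · exfalso
      apply hne
      have e1 : (j₁ : ℕ) = r - 1 := by have := j₁.2; omega
      have e2 : (j₂ : ℕ) = r - 1 := by have := j₂.2; omega
      exact Fin.ext (e1.trans e2.symm)
  · -- completeness
    intro i F hFc hA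
    exact (key i F hFc hA).1
  · -- partition
    intro F hF
    have hFc := hH F hF
    obtain ⟨he1, he2⟩ := hch F hFc
    set e := ch F with hedef
    set i : Fin k := G'.equivFin ⟨e, he1⟩ with hidef
    have hEi : E i = e := by
      simp [E, hidef]
    have hcard_e : e.card = r - 1 := hG' e he1
    have hsd : (F \ e).card = 1 := by
      rw [Finset.card_sdiff_of_subset he2, hFc, hcard_e]; omega
    obtain ⟨v, hv⟩ := Finset.card_eq_one.mp hsd
    have hvsd : v ∈ F \ e := hv ▸ Finset.mem_singleton_self v
    obtain ⟨hvF, hvne⟩ := Finset.mem_sdiff.mp hvsd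
    have hins : insert v e ⊆ F := Finset.insert_subset hvF he2
    have hcins : (insert v e).card = r := by
      rw [Finset.card_insert_of_notMem hvne, hcard_e]; omega
    have hFeq : F = insert v e := by
      apply (Finset.eq_of_subset_of_card_le hins (by rw [hcins, hFc])).symm
    have hprop : ∀ j : Fin r, (F ∩ A i j).card = 1 := by
      intro j
      by_cases hj : (j : ℕ) < r - 1
      · simp only [A, dif_pos hj]
        have hx : ((m i) ⟨(j : ℕ), hj⟩ : Fin n) ∈ F := by
          have hEF : E i ⊆ F := by rw [hEi]; exact he2
          exact hEF (hmem i ⟨(j : ℕ), hj⟩)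
        rw [Finset.inter_singleton_of_mem hx]
        exact Finset.card_singleton _
      · simp only [A, dif_neg hj]
        have : F ∩ S i = {v} := by
          ext w
          simp only [Finset.mem_inter, Finset.mem_singleton]
          constructor
          · rintro ⟨hwF, hwS⟩
            have hwne := hSnot i w hwS
            rw [hEi] at hwne
            rw [hFeq] at hwF
            rcases Finset.mem_insert.mp hwF with h | h
            · exact h
            · exact absurd h hwne
          · rintro rfl
            refine ⟨hvF, ?_⟩
            simp only [S, Finset.mem_filter, Finset.mem_univ, true_and, hEi]
            exact ⟨hvne, hFeq ▸ hF, by rw [← hFeq, ← hedef]⟩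
        rw [this]
        exact Finset.card_singleton v
    refine ⟨i, hprop, ?_⟩
    intro i' hi'
    have := (key i' F hFc hi').2
    apply hEinj
    rw [← this, hEi]
end

section
/- For every r ≥ 3 and every r-uniform hypergraph H on n vertices, f(H) ≤ binom(n, r−1) − ex(n, K_r^{(r−1)}), where f(H) is the minimum number of complete r-partite r-uniform subhypergraphs of H partitioning E(H), and ex(n, K_r^{(r−1)}) is the Turán number of the complete (r−1)-uniform hypergraph on r vertices. -/
open Classical in
/-- For `r ≥ 3` and any `r`-uniform hypergraph `H` on `n` vertices,
`f(H) ≤ C(n, r-1) - ex(n, K_r^{(r-1)})`: the edge set of `H` can be partitioned into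
at most that many complete `r`-partite `r`-uniform subhypergraphs. Here the Turán
number `ex(n, K_r^{(r-1)})` is the largest number of edges of an `(r-1)`-uniform
hypergraph on `[n]` in which no `r`-set has all of its `(r-1)`-subsets as edges. -/
theorem decomposition_number_le_choose_sub_turan (n r : ℕ) (hr : 3 ≤ r)
    (H : Finset (Finset (Fin n))) (hH : ∀ F ∈ H, F.card = r) :
    ∃ (k : ℕ) (A : Fin k → Fin r → Finset (Fin n)),
      k ≤ Nat.choose n (r - 1) -
        ((Finset.univ.filter (fun G : Finset (Finset (Fin n)) =>
            (∀ e ∈ G, e.card = r - 1) ∧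
            ∀ S : Finset (Fin n), S.card = r →
              ∃ e ⊆ S, e.card = r - 1 ∧ e ∉ G)).sup Finset.card) ∧
      (∀ i, ∀ j₁ j₂ : Fin r, j₁ ≠ j₂ → Disjoint (A i j₁) (A i j₂)) ∧
      (∀ i, ∀ F : Finset (Fin n), F.card = r →
        (∀ j, (F ∩ A i j).card = 1) → F ∈ H) ∧
      (∀ F ∈ H, ∃! i, ∀ j, (F ∩ A i j).card = 1) := by
  classical
  set T := (Finset.univ.filter (fun G : Finset (Finset (Fin n)) =>
            (∀ e ∈ G, e.card = r - 1) ∧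
            ∀ S : Finset (Fin n), S.card = r →
              ∃ e ⊆ S, e.card = r - 1 ∧ e ∉ G)) with hT
  have hne : T.Nonempty := by
    refine ⟨∅, ?_⟩
    rw [hT, Finset.mem_filter]
    refine ⟨Finset.mem_univ _, by simp, fun S hS => ?_⟩
    obtain ⟨e, heS, hec⟩ := Finset.exists_subset_card_eq (s := S) (n := r-1) (by omega)
    exact ⟨e, heS, hec, by simp⟩
  obtain ⟨G₀, hG₀T, hsup⟩ := Finset.exists_mem_eq_sup T hne Finset.card
  rw [hT, Finset.mem_filter] at hG₀T
  obtain ⟨-, hG₀card, hG₀free⟩ := hG₀T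
  set P := Finset.powersetCard (r-1) (Finset.univ : Finset (Fin n)) with hP
  have hGP : G₀ ⊆ P := fun e he =>
    Finset.mem_powersetCard.2 ⟨Finset.subset_univ e, hG₀card e he⟩
  set C := P \ G₀ with hC
  have hCcard : C.card = Nat.choose n (r-1) - G₀.card := by
    rw [hC, Finset.card_sdiff_of_subset hGP, hP, Finset.card_powersetCard, Finset.card_univ, Fintype.card_fin]
  -- the chosen non-edge of each F ∈ H
  set ch : Finset (Fin n) → Finset (Fin n) := fun F =>
    if h : ∃ e, e ⊆ F ∧ e.card = r - 1 ∧ e ∉ G₀ then h.choose else ∅ with hch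
  have hchspec : ∀ F ∈ H, ch F ⊆ F ∧ (ch F).card = r - 1 ∧ ch F ∉ G₀ := by
    intro F hF
    have hex : ∃ e, e ⊆ F ∧ e.card = r - 1 ∧ e ∉ G₀ := by
      obtain ⟨e, h1, h2, h3⟩ := hG₀free F (hH F hF)
      exact ⟨e, h1, h2, h3⟩
    simp only [hch, dif_pos hex]
    exact hex.choose_spec
  -- the "last part"
  set L : Finset (Fin n) → Finset (Fin n) := fun e =>
    Finset.univ.filter (fun v => v ∉ e ∧ insert v e ∈ H ∧ ch (insert v e) = e) with hL
  have hEcard : ∀ i : Fin C.card, (↑(C.equivFin.symm i) : Finset (Fin n)).card = r - 1 := by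
    intro i
    have hmem : (↑(C.equivFin.symm i) : Finset (Fin n)) ∈ P \ G₀ := (C.equivFin.symm i).2
    exact (Finset.mem_powersetCard.1 (Finset.mem_sdiff.1 hmem).1).2
  set A : Fin C.card → Fin r → Finset (Fin n) := fun i j =>
    if h : (j : ℕ) < r - 1 then
      {((↑(C.equivFin.symm i) : Finset (Fin n)).orderIsoOfFin (hEcard i) ⟨j, h⟩ : Fin n)}
    else L ↑(C.equivFin.symm i) with hA
  -- forward: if ch F = e_i then F meets every part of piece i in exactly one vertex
  have fwd : ∀ (i : Fin C.card) (F : Finset (Fin n)), F ∈ H →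
      ch F = ↑(C.equivFin.symm i) → ∀ j : Fin r, (F ∩ A i j).card = 1 := by
    intro i F hF hchF j
    obtain ⟨hsub, hcard, -⟩ := hchspec F hF
    rw [hchF] at hsub hcard
    by_cases h : (j : ℕ) < r - 1
    · rw [hA]
      simp only [dif_pos h]
      have hx : ((↑(C.equivFin.symm i) : Finset (Fin n)).orderIsoOfFin (hEcard i) ⟨j, h⟩ : Fin n)
          ∈ F := hsub ((↑(C.equivFin.symm i) : Finset (Fin n)).orderIsoOfFin (hEcard i) ⟨j, h⟩).2
      rw [Finset.inter_singleton_of_mem hx, Finset.card_singleton]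
    · rw [hA]
      simp only [dif_neg h]
      set e : Finset (Fin n) := ↑(C.equivFin.symm i) with he
      have hFd : (F \ e).card = 1 := by
        rw [Finset.card_sdiff_of_subset hsub, hH F hF, hcard]; omega
      obtain ⟨v, hv⟩ := Finset.card_eq_one.1 hFd
      have hvF : v ∈ F ∧ v ∉ e := by
        have : v ∈ F \ e := by rw [hv]; exact Finset.mem_singleton_self v
        exact ⟨(Finset.mem_sdiff.1 this).1, (Finset.mem_sdiff.1 this).2⟩
      have hins : insert v e = F := by
        apply Finset.eq_of_subset_of_card_le
        · exact Finset.insert_subset hvF.1 hsub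
        · rw [Finset.card_insert_of_notMem hvF.2, hH F hF, hcard]; omega
      have : F ∩ L e = {v} := by
        apply Finset.Subset.antisymm
        · intro w hw
          rw [Finset.mem_inter, hL, Finset.mem_filter] at hw
          rw [← hv, Finset.mem_sdiff]
          exact ⟨hw.1, hw.2.2.1⟩
        · intro w hw
          rw [Finset.mem_singleton] at hw
          subst hw
          rw [Finset.mem_inter, hL, Finset.mem_filter]
          exact ⟨hvF.1, Finset.mem_univ _, hvF.2, by rw [hins]; exact hF,
            by rw [hins]; exact hchF⟩
      rw [this, Finset.card_singleton]
  -- backward: if F meets every part of piece i once, then F ∈ H and ch F = e_i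
  have bwd : ∀ (i : Fin C.card) (F : Finset (Fin n)), F.card = r →
      (∀ j : Fin r, (F ∩ A i j).card = 1) → F ∈ H ∧ ch F = ↑(C.equivFin.symm i) := by
    intro i F hFc hAj
    have hyF : ∀ y : Fin n, (F ∩ {y}).card = 1 → y ∈ F := by
      intro y hy
      by_contra hyn
      rw [Finset.inter_singleton_of_notMem hyn] at hy
      simp at hy
    have hcard : (↑(C.equivFin.symm i) : Finset (Fin n)).card = r - 1 := hEcard i
    have hsub : (↑(C.equivFin.symm i) : Finset (Fin n)) ⊆ F := by
      intro x hx
      set m := ((↑(C.equivFin.symm i) : Finset (Fin n)).orderIsoOfFin (hEcard i)).symm ⟨x, hx⟩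
        with hm
      have hmx : ((↑(C.equivFin.symm i) : Finset (Fin n)).orderIsoOfFin (hEcard i) m : Fin n)
          = x := by rw [hm, OrderIso.apply_symm_apply]
      have hmlt : (m : ℕ) < r - 1 := m.2
      have hj := hAj ⟨m, by omega⟩
      rw [hA] at hj
      simp only [dif_pos hmlt] at hj
      show x ∈ F
      rw [← hmx]
      exact hyF _ hj
    have hjlast := hAj ⟨r - 1, by omega⟩
    rw [hA] at hjlast
    simp only [dif_neg (lt_irrefl (r-1))] at hjlast
    obtain ⟨v, hv⟩ := Finset.card_eq_one.1 hjlast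
    have hvmem : v ∈ F ∩ L ↑(C.equivFin.symm i) := by
      rw [hv]; exact Finset.mem_singleton_self v
    rw [Finset.mem_inter, hL, Finset.mem_filter] at hvmem
    obtain ⟨hvF, -, hve, hvH, hvch⟩ := hvmem
    have hins : insert v (↑(C.equivFin.symm i) : Finset (Fin n)) = F := by
      apply Finset.eq_of_subset_of_card_le
      · exact Finset.insert_subset hvF hsub
      · rw [Finset.card_insert_of_notMem hve, hFc, hcard]; omega
    rw [hins] at hvH hvch
    exact ⟨hvH, hvch⟩
  refine ⟨C.card, A, ?_, ?_, ?_, ?_⟩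
  · rw [hCcard, hsup]
  · intro i j₁ j₂ hjne
    rw [hA]
    by_cases h1 : (j₁ : ℕ) < r - 1 <;> by_cases h2 : (j₂ : ℕ) < r - 1
    · simp only [dif_pos h1, dif_pos h2]
      rw [Finset.disjoint_singleton]
      intro hcontra
      apply hjne
      have := Subtype.coe_injective hcontra
      have := (EquivLike.injective
        ((↑(C.equivFin.symm i) : Finset (Fin n)).orderIsoOfFin (hEcard i))) this
      have h4 := congrArg Fin.val this
      exact Fin.ext h4
    · simp only [dif_pos h1, dif_neg h2]
      rw [Finset.disjoint_left]
      intro a ha haL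
      rw [Finset.mem_singleton] at ha
      rw [hL, Finset.mem_filter] at haL
      exact haL.2.1 (ha ▸ ((↑(C.equivFin.symm i) : Finset (Fin n)).orderIsoOfFin
        (hEcard i) ⟨j₁, h1⟩).2)
    · simp only [dif_neg h1, dif_pos h2]
      rw [Finset.disjoint_right]
      intro a ha haL
      rw [Finset.mem_singleton] at ha
      rw [hL, Finset.mem_filter] at haL
      exact haL.2.1 (ha ▸ ((↑(C.equivFin.symm i) : Finset (Fin n)).orderIsoOfFin
        (hEcard i) ⟨j₂, h2⟩).2)
    · exfalso
      apply hjne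
      have e1 : (j₁ : ℕ) = r - 1 := by omega
      have e2 : (j₂ : ℕ) = r - 1 := by omega
      exact Fin.ext (e1.trans e2.symm)
  · exact fun i F hF hAj => (bwd i F hF hAj).1
  · intro F hF
    obtain ⟨hsub, hcard, hnG⟩ := hchspec F hF
    have hmemC : ch F ∈ C := by
      rw [hC, Finset.mem_sdiff, hP, Finset.mem_powersetCard]
      exact ⟨⟨Finset.subset_univ _, hcard⟩, hnG⟩
    refine ⟨C.equivFin ⟨ch F, hmemC⟩, fwd _ F hF ?_, ?_⟩
    · rw [Equiv.symm_apply_apply]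
    · intro i' hi'
      have h2 := (bwd i' F (hH F hF) hi').2
      apply C.equivFin.symm.injective
      rw [Equiv.symm_apply_apply]
      exact Subtype.ext h2.symm
end

section
/- For r ≥ 3, if H ∈ H^{(r)}(n,1/2), then with high probability (probability tending to 1 as n → ∞), every collection of pairwise disjoint sets A_1,…,A_r ⊆ [n] with |A_1| ≤ ⋯ ≤ |A_r| that forms a complete r-partite r-uniform subhypergraph of H satisfies |A_1|·|A_2|·⋯·|A_{r−1}| < (r+1) log₂ n. -/
open MeasureTheory

/-- The random `r`-uniform hypergraph `H^{(r)}(n,p)`, modelled as the product Bernoulli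
measure on functions assigning to each `r`-subset of `[n]` a Boolean (edge/non-edge). -/
noncomputable def randomHypergraph (n r : ℕ) (p : ENNReal) (hp : p ≤ 1) :
    Measure ({F : Finset (Fin n) // F.card = r} → Bool) :=
  Measure.pi (fun _ => (PMF.bernoulli p.toNNReal (by simpa using ENNReal.toNNReal_mono ENNReal.one_ne_top hp)).toMeasure)

lemma eventMeasure (n r : ℕ) (P : {F : Finset (Fin n) // F.card = r} → Prop)
    [DecidablePred P] :
    randomHypergraph n r (1/2) (by norm_num)
      {ω | ∀ F, P F → ω F = true}
      = (1/2 : ENNReal) ^ (Finset.univ.filter P).card := by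
  have hset : {ω : {F : Finset (Fin n) // F.card = r} → Bool | ∀ F, P F → ω F = true}
      = Set.univ.pi (fun F => if P F then ({true} : Set Bool) else Set.univ) := by
    ext ω
    simp only [Set.mem_setOf_eq, Set.mem_pi, Set.mem_univ, forall_true_left]
    constructor
    · intro h F
      by_cases hF : P F <;> simp [hF, h F]
    · intro h F hF
      have := h F
      simpa [hF] using this
  rw [randomHypergraph, hset, Measure.pi_pi]
  have hone : ∀ F : {F : Finset (Fin n) // F.card = r},
      (PMF.bernoulli (1/2 : ENNReal).toNNReal (by simpa using ENNReal.toNNReal_mono ENNReal.one_ne_top (by norm_num : (1/2 : ENNReal) ≤ 1))).toMeasure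
        (if P F then ({true} : Set Bool) else Set.univ)
      = if P F then (1/2 : ENNReal) else 1 := by
    intro F
    by_cases hF : P F <;> simp [hF, PMF.toMeasure_apply_singleton, PMF.bernoulli_apply, ENNReal.mul_inv_cancel, ENNReal.coe_toNNReal, ENNReal.toNNReal_ofNat, ENNReal.coe_inv_two,
      ENNReal.inv_two_add_inv_two]
  simp only [hone]
  rw [Finset.prod_ite, Finset.prod_const, Finset.prod_const_one, mul_one]

lemma transversal_count (n r : ℕ) (A : Fin r → Finset (Fin n))
    (hd : ∀ i j, i ≠ j → Disjoint (A i) (A j)) :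
    ∏ i, (A i).card ≤
      (Finset.univ.filter (fun F : {F : Finset (Fin n) // F.card = r} =>
        ∀ i, ((F : Finset (Fin n)) ∩ A i).card = 1)).card := by
  classical
  -- key: for x : Π i, A i, the map i ↦ x i is injective
  have hxinj : ∀ x : (∀ i, {v // v ∈ A i}), Function.Injective (fun i => (x i : Fin n)) := by
    intro x i j hij
    by_contra hne
    exact Finset.disjoint_left.mp (hd i j hne) (x i).2
      (by rw [show ((x i : Fin n)) = (x j : Fin n) from hij]; exact (x j).2)
  have hcard : ∀ x : (∀ i, {v // v ∈ A i}),
      (Finset.image (fun i => (x i : Fin n)) Finset.univ).card = r := by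
    intro x
    rw [Finset.card_image_of_injective _ (hxinj x), Finset.card_univ, Fintype.card_fin]
  set φ : (∀ i, {v // v ∈ A i}) → {F : Finset (Fin n) // F.card = r} :=
    fun x => ⟨Finset.image (fun i => (x i : Fin n)) Finset.univ, hcard x⟩ with hφ
  have hmem : ∀ x, ∀ i, ((φ x : Finset (Fin n)) ∩ A i).card = 1 := by
    intro x i
    have : (φ x : Finset (Fin n)) ∩ A i = {(x i : Fin n)} := by
      ext y
      simp only [Finset.mem_inter, Finset.mem_image, Finset.mem_univ, true_and,
        Finset.mem_singleton, hφ]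
      constructor
      · rintro ⟨⟨j, rfl⟩, hy⟩
        by_contra hne
        have hji : j ≠ i := by rintro rfl; exact hne rfl
        exact Finset.disjoint_left.mp (hd j i hji) (x j).2 hy
      · rintro rfl
        exact ⟨⟨i, rfl⟩, (x i).2⟩
    rw [this, Finset.card_singleton]
  calc ∏ i, (A i).card = (Finset.univ : Finset (∀ i, {v // v ∈ A i})).card := by
        rw [Finset.card_univ, Fintype.card_pi]; simp
    _ ≤ _ := by
        apply Finset.card_le_card_of_injOn φ
        · intro x _
          simp only [Finset.mem_coe, Finset.mem_filter, Finset.mem_univ, true_and]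
          exact hmem x
        · intro x _ x' _ hxx'
          funext i
          have hx : (x i : Fin n) ∈ (φ x' : Finset (Fin n)) := by
            rw [← hxx']; exact Finset.mem_image_of_mem _ (Finset.mem_univ i)
          simp only [hφ, Finset.mem_image, Finset.mem_univ, true_and] at hx
          obtain ⟨j, hj⟩ := hx
          have hji : j = i := by
            by_contra hne
            exact Finset.disjoint_left.mp (hd j i hne) (x' j).2 (by rw [hj]; exact (x i).2)
          exact Subtype.ext (by rw [← hj, hji])

lemma family_count (n r a : ℕ) :
    (Finset.univ.filter (fun A : Fin r → Finset (Fin n) => ∀ i, (A i).card ≤ a)).card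
      ≤ ((n+1)^a)^r := by
  classical
  have := Finset.card_le_card_of_injOn
    (f := fun (A : Fin r → Finset (Fin n)) (i : Fin r) (j : Fin a) =>
      ((A i).sort (·≤·))[(j : ℕ)]?)
    (s := Finset.univ.filter (fun A : Fin r → Finset (Fin n) => ∀ i, (A i).card ≤ a))
    (t := Finset.univ)
    (fun A _ => Finset.mem_univ _)
    ?_
  · calc _ ≤ (Finset.univ : Finset (Fin r → Fin a → Option (Fin n))).card := this
      _ = ((n+1)^a)^r := by
          rw [Finset.card_univ]
          simp [Fintype.card_fun]
  · intro A hA A' hA' h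
    simp only [Finset.coe_filter, Set.mem_setOf_eq, Finset.mem_univ, true_and] at hA hA'
    funext i
    have hl : ((A i).sort (·≤·)) = ((A' i).sort (·≤·)) := by
      apply List.ext_getElem?
      intro k
      by_cases hk : k < a
      · exact congrFun (congrFun h i) ⟨k, hk⟩
      · push_neg at hk
        rw [List.getElem?_eq_none, List.getElem?_eq_none]
        · rw [Finset.length_sort]; exact le_trans (hA' i) hk
        · rw [Finset.length_sort]; exact le_trans (hA i) hk
    have := congrArg List.toFinset hl
    rwa [Finset.sort_toFinset, Finset.sort_toFinset] at this

lemma filter_not_lt (r : ℕ) (hr : 1 ≤ r) :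
    Finset.univ.filter (fun i : Fin r => ¬((i : ℕ) < r - 1)) = {⟨r-1, by omega⟩} := by
  ext i
  have := i.isLt
  simp only [Finset.mem_filter, Finset.mem_univ, true_and, Finset.mem_singleton, Fin.ext_iff]
  omega

lemma single_bad_bound (n r L : ℕ) (hr : 1 ≤ r) (A : Fin r → Finset (Fin n))
    (hdisj : ∀ i j, i ≠ j → Disjoint (A i) (A j))
    (hL : L ≤ ∏ i ∈ Finset.univ.filter (fun i : Fin r => (i : ℕ) < r - 1), (A i).card)
    (h2L : n^(r+1) ≤ 2^L) :
    randomHypergraph n r (1/2) (by norm_num)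
      {ω | ∀ F : {F : Finset (Fin n) // F.card = r},
        (∀ i, ((F : Finset (Fin n)) ∩ A i).card = 1) → ω F = true}
      ≤ (((n : ENNReal))^(r+1))⁻¹ ^ (A ⟨r-1, by omega⟩).card := by
  classical
  set a := (A ⟨r-1, by omega⟩).card with ha
  have hm : ∏ i, (A i).card
      = (∏ i ∈ Finset.univ.filter (fun i : Fin r => (i : ℕ) < r - 1), (A i).card) * a := by
    rw [← Finset.prod_filter_mul_prod_filter_not Finset.univ (fun i : Fin r => (i : ℕ) < r - 1),
      filter_not_lt r hr, Finset.prod_singleton]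
  have hhalf : (1/2 : ENNReal) ≤ 1 := by norm_num
  rw [eventMeasure]
  calc (1/2 : ENNReal) ^ (Finset.univ.filter (fun F : {F : Finset (Fin n) // F.card = r} =>
          ∀ i, ((F : Finset (Fin n)) ∩ A i).card = 1)).card
      ≤ (1/2 : ENNReal) ^ (∏ i, (A i).card) :=
        pow_le_pow_of_le_one zero_le hhalf (transversal_count n r A hdisj)
    _ ≤ (1/2 : ENNReal) ^ (L * a) := by
        apply pow_le_pow_of_le_one zero_le hhalf
        rw [hm]; exact Nat.mul_le_mul_right a hL
    _ = ((1/2 : ENNReal) ^ L) ^ a := by rw [pow_mul]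
    _ ≤ (((n : ENNReal))^(r+1))⁻¹ ^ a := by
        apply pow_le_pow_left₀ zero_le
        have h1 : (1/2 : ENNReal) ^ L = ((2 : ENNReal) ^ L)⁻¹ := by
          rw [one_div, ← ENNReal.inv_pow]
        rw [h1]
        rw [ENNReal.inv_le_inv]
        calc ((n : ENNReal))^(r+1) = ((n^(r+1) : ℕ) : ENNReal) := by push_cast; ring
          _ ≤ ((2^L : ℕ) : ENNReal) := by exact_mod_cast h2L
          _ = (2 : ENNReal)^L := by push_cast; ring

lemma main_bound (r n : ℕ) (hr : 3 ≤ r) (hn1 : (5:ℝ)^(r-1) < Real.logb 2 n)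
    (hn2 : 2^(r+1) ≤ n) :
    randomHypergraph n r (1/2) (by norm_num)
      ({ω : {F : Finset (Fin n) // F.card = r} → Bool | ∀ A : Fin r → Finset (Fin n),
          (∀ i j, i ≠ j → Disjoint (A i) (A j)) →
          (Monotone fun i => (A i).card) →
          (∀ F : {F : Finset (Fin n) // F.card = r},
            (∀ i, ((F : Finset (Fin n)) ∩ A i).card = 1) → ω F = true) →
          ((∏ i ∈ Finset.univ.filter (fun i : Fin r => (i : ℕ) < r - 1),
              (A i).card : ℝ) < (r + 1) * Real.logb 2 n)}ᶜ)
      ≤ 2^(6*r+1) * ((n : ENNReal)⁻¹)^5 := by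
  classical
  have hr1 : 1 ≤ r := by omega
  have hn0 : 0 < n := lt_of_lt_of_le (Nat.pow_pos (by norm_num)) hn2
  have hn1' : (1:ℝ) ≤ (n:ℝ) := by exact_mod_cast hn0
  have hlog0 : 0 ≤ Real.logb 2 n := Real.logb_nonneg (by norm_num) hn1'
  set lastI : Fin r := ⟨r-1, by omega⟩ with hlastI
  set L := ⌈((r:ℝ)+1) * Real.logb 2 n⌉₊ with hLdef
  -- 2^L ≥ n^(r+1)
  have h2L : n^(r+1) ≤ 2^L := by
    have hc : ((r:ℝ)+1) * Real.logb 2 n ≤ (L:ℝ) := Nat.le_ceil _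
    have h1 : ((n:ℝ))^((r:ℝ)+1) = (2:ℝ) ^ (((r:ℝ)+1) * Real.logb 2 n) := by
      rw [mul_comm, Real.rpow_mul (by norm_num), Real.rpow_logb (by norm_num) (by norm_num)
        (by positivity)]
    have h2 : (2:ℝ) ^ (((r:ℝ)+1) * Real.logb 2 n) ≤ (2:ℝ) ^ ((L:ℝ)) :=
      Real.rpow_le_rpow_of_exponent_le (by norm_num) hc
    have h3 : ((n:ℝ))^((r:ℝ)+1) = ((n:ℝ))^((r+1 : ℕ)) := by
      rw [← Real.rpow_natCast (n:ℝ) (r+1)]; push_cast; ring_nf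
    have h4 : (2:ℝ) ^ ((L:ℝ)) = (2:ℝ)^(L:ℕ) := by rw [Real.rpow_natCast]
    have : ((n:ℝ))^((r+1:ℕ)) ≤ (2:ℝ)^(L:ℕ) := by rw [← h3, ← h4, h1]; exact h2
    exact_mod_cast this
  set μ := randomHypergraph n r (1/2) (by norm_num : (1/2 : ENNReal) ≤ 1) with hμdef
  set Bad : (Fin r → Finset (Fin n)) → Prop := fun A =>
    (∀ i j, i ≠ j → Disjoint (A i) (A j)) ∧ (Monotone fun i => (A i).card) ∧
    ¬((∏ i ∈ Finset.univ.filter (fun i : Fin r => (i : ℕ) < r - 1),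
        (A i).card : ℝ) < (r + 1) * Real.logb 2 n) with hBad
  set badF : Finset (Fin r → Finset (Fin n)) := Finset.univ.filter Bad with hbadF
  set E : (Fin r → Finset (Fin n)) → Set ({F : Finset (Fin n) // F.card = r} → Bool) :=
    fun A => {ω | ∀ F : {F : Finset (Fin n) // F.card = r},
        (∀ i, ((F : Finset (Fin n)) ∩ A i).card = 1) → ω F = true} with hE
  -- union bound
  have hsub : ({ω : {F : Finset (Fin n) // F.card = r} → Bool | ∀ A : Fin r → Finset (Fin n),
          (∀ i j, i ≠ j → Disjoint (A i) (A j)) →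
          (Monotone fun i => (A i).card) →
          (∀ F : {F : Finset (Fin n) // F.card = r},
            (∀ i, ((F : Finset (Fin n)) ∩ A i).card = 1) → ω F = true) →
          ((∏ i ∈ Finset.univ.filter (fun i : Fin r => (i : ℕ) < r - 1),
              (A i).card : ℝ) < (r + 1) * Real.logb 2 n)}ᶜ)
      ⊆ ⋃ A ∈ badF, E A := by
    intro ω hω
    simp only [Set.mem_compl_iff, Set.mem_setOf_eq] at hω
    push_neg at hω
    obtain ⟨A, h1, h2, h3, h4⟩ := hω
    simp only [Set.mem_iUnion]
    exact ⟨A, Finset.mem_filter.mpr ⟨Finset.mem_univ _, h1, h2, not_lt.mpr h4⟩, h3⟩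
  -- facts about bad families
  have hP1 : ∀ A, Bad A → L ≤ ∏ i ∈ Finset.univ.filter
      (fun i : Fin r => (i : ℕ) < r - 1), (A i).card := by
    intro A hA
    exact Nat.ceil_le.mpr (by push_cast; exact not_lt.mp hA.2.2)
  have hkey6 : ∀ A, Bad A → 6 ≤ (A lastI).card := by
    intro A hA
    by_contra hlt
    push_neg at hlt
    have hcards : ∀ i, (A i).card ≤ (A lastI).card := by
      intro i
      exact hA.2.1 (by simp [hlastI, Fin.le_def]; omega)
    have hfc : (Finset.univ.filter (fun i : Fin r => (i : ℕ) < r - 1)).card = r - 1 := by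
      have h := Finset.card_filter_add_card_filter_not (s := (Finset.univ : Finset (Fin r)))
        (p := fun i : Fin r => (i : ℕ) < r - 1)
      rw [filter_not_lt r hr1] at h
      simp only [Finset.card_singleton, Finset.card_univ, Fintype.card_fin] at h
      omega
    have hP1a : (∏ i ∈ Finset.univ.filter (fun i : Fin r => (i : ℕ) < r - 1), (A i).card)
        ≤ (A lastI).card ^ (r-1) := by
      have h := Finset.prod_le_pow_card (Finset.univ.filter (fun i : Fin r => (i : ℕ) < r - 1))
        (fun i => (A i).card) ((A lastI).card) (fun i _ => hcards i)
      rwa [hfc] at h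
    have hreal : ((r:ℝ) + 1) * Real.logb 2 n ≤ ((A lastI).card : ℝ) ^ (r-1) := by
      have h1 := not_lt.mp hA.2.2
      calc ((r:ℝ) + 1) * Real.logb 2 n
          ≤ _ := h1
        _ = ((∏ i ∈ Finset.univ.filter (fun i : Fin r => (i : ℕ) < r - 1), (A i).card : ℕ) : ℝ) := by
            push_cast; ring
        _ ≤ (((A lastI).card ^ (r-1) : ℕ) : ℝ) := by exact_mod_cast hP1a
        _ = ((A lastI).card : ℝ) ^ (r-1) := by push_cast; ring
    have h5 : ((A lastI).card : ℝ) ^ (r-1) ≤ (5:ℝ)^(r-1) := by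
      apply pow_le_pow_left₀ (by positivity)
      exact_mod_cast Nat.le_of_lt_succ hlt
    have hlb : Real.logb 2 n ≤ ((r:ℝ) + 1) * Real.logb 2 n := by
      nlinarith [hlog0]
    linarith
  -- the per-family measure bound
  have hper : ∀ A ∈ badF, μ (E A) ≤ (((n : ENNReal))^(r+1))⁻¹ ^ (A lastI).card := by
    intro A hA
    have hBadA : Bad A := (Finset.mem_filter.mp hA).2
    exact single_bad_bound n r L hr1 A hBadA.1 (hP1 A hBadA) h2L
  -- ENNReal setup
  set N : ENNReal := (n : ENNReal) with hN
  have hN0 : N ≠ 0 := by rw [hN]; exact Nat.cast_ne_zero.mpr hn0.ne'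
  have hNt : N ≠ ⊤ := by simp [hN]
  set c : ENNReal := (N^(r+1))⁻¹ with hc
  set q : ENNReal := ((n+1 : ℕ) : ENNReal)^r * c with hq
  have hnp1 : ((n+1 : ℕ) : ENNReal) ≤ 2 * N := by
    have : (n+1 : ℕ) ≤ 2 * n := by omega
    calc ((n+1 : ℕ) : ENNReal) ≤ ((2*n : ℕ) : ENNReal) := by exact_mod_cast this
      _ = 2 * N := by push_cast; ring
  have hqd : q ≤ 2^r * N⁻¹ := by
    calc q ≤ (2*N)^r * c := by
          apply mul_le_mul_left
          exact pow_le_pow_left' hnp1 r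
      _ = 2^r * N⁻¹ := by
          rw [hc, mul_pow, pow_succ, ENNReal.mul_inv (Or.inl (pow_ne_zero _ hN0))
            (Or.inl (ENNReal.pow_ne_top hNt))]
          rw [mul_assoc, ← mul_assoc (N^r), ENNReal.mul_inv_cancel (pow_ne_zero _ hN0)
            (ENNReal.pow_ne_top hNt), one_mul]
  have hdhalf : (2:ENNReal)^r * N⁻¹ ≤ 1/2 := by
    have h1 : N⁻¹ ≤ ((2^(r+1) : ℕ) : ENNReal)⁻¹ := by
      apply ENNReal.inv_le_inv.mpr
      rw [hN]
      exact_mod_cast hn2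
    calc (2:ENNReal)^r * N⁻¹ ≤ (2:ENNReal)^r * ((2^(r+1) : ℕ) : ENNReal)⁻¹ :=
          mul_le_mul_right h1 _
      _ = 1/2 := by
          push_cast
          rw [pow_succ, ENNReal.mul_inv (Or.inl (by positivity)) (Or.inl (by
            exact ENNReal.pow_ne_top (by norm_num)))]
          rw [← mul_assoc, ENNReal.mul_inv_cancel (by positivity)
            (ENNReal.pow_ne_top (by norm_num)), one_mul, one_div]
  have hq1 : q ≤ 1 := le_trans hqd (le_trans hdhalf (by norm_num))
  -- main chain
  calc μ _ ≤ μ (⋃ A ∈ badF, E A) := measure_mono hsub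
    _ ≤ ∑ A ∈ badF, μ (E A) := measure_biUnion_finset_le _ _
    _ ≤ ∑ A ∈ badF, c ^ (A lastI).card := Finset.sum_le_sum hper
    _ = ∑ a ∈ Finset.range (n+1), ∑ A ∈ badF.filter (fun A => (A lastI).card = a),
          c ^ (A lastI).card := by
        refine (Finset.sum_fiberwise_of_maps_to ?_ _).symm
        intro A _
        simp only [Finset.mem_range]
        exact Nat.lt_succ_of_le (le_trans (Finset.card_le_univ _) (by simp))
    _ ≤ ∑ a ∈ Finset.range (n+1), q^6 := by
        apply Finset.sum_le_sum
        intro a _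
        rcases Finset.eq_empty_or_nonempty (badF.filter (fun A => (A lastI).card = a)) with
          hemp | ⟨A0, hA0⟩
        · rw [hemp, Finset.sum_empty]; exact zero_le
        · have hA0' := Finset.mem_filter.mp hA0
          have ha6 : 6 ≤ a := by
            rw [← hA0'.2]
            exact hkey6 A0 (Finset.mem_filter.mp hA0'.1).2
          have hcardbd : (badF.filter (fun A => (A lastI).card = a)).card ≤ ((n+1)^a)^r := by
            refine le_trans (Finset.card_le_card ?_) (family_count n r a)
            intro A hA
            have hA' := Finset.mem_filter.mp hA
            have hBadA : Bad A := (Finset.mem_filter.mp hA'.1).2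
            simp only [Finset.mem_filter, Finset.mem_univ, true_and]
            intro i
            rw [← hA'.2]
            exact hBadA.2.1 (by simp [hlastI, Fin.le_def]; omega)
          calc ∑ A ∈ badF.filter (fun A => (A lastI).card = a), c ^ (A lastI).card
              = ∑ A ∈ badF.filter (fun A => (A lastI).card = a), c ^ a := by
                apply Finset.sum_congr rfl
                intro A hA
                rw [(Finset.mem_filter.mp hA).2]
            _ = (badF.filter (fun A => (A lastI).card = a)).card * c^a := by
                rw [Finset.sum_const, nsmul_eq_mul]
            _ ≤ ((((n+1)^a)^r : ℕ) : ENNReal) * c^a := by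
                apply mul_le_mul_left
                exact_mod_cast hcardbd
            _ = q^a := by
                rw [hq, mul_pow, ← pow_mul, ← pow_mul]
                push_cast
                ring_nf
            _ ≤ q^6 := pow_le_pow_of_le_one zero_le hq1 ha6
    _ = ((n+1 : ℕ) : ENNReal) * q^6 := by
        rw [Finset.sum_const, Finset.card_range, nsmul_eq_mul]
    _ ≤ (2 * N) * (2^r * N⁻¹)^6 := by
        exact mul_le_mul' hnp1 (pow_le_pow_left' hqd 6)
    _ = 2^(6*r+1) * (N⁻¹)^5 := by
        rw [mul_pow, ← pow_mul]
        have hNN : N * N⁻¹ = 1 := ENNReal.mul_inv_cancel hN0 hNt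
        calc 2 * N * ((2:ENNReal)^(r*6) * (N⁻¹)^6)
            = 2^(r*6+1) * ((N * N⁻¹) * (N⁻¹)^5) := by ring
          _ = 2^(6*r+1) * (N⁻¹)^5 := by
              rw [hNN, one_mul]
              try rw [Nat.mul_comm r 6]

/-- For `r ≥ 3`, with high probability in `H^{(r)}(n,1/2)`, every family of pairwise
disjoint sets `A 1, …, A r` with nondecreasing sizes forming a complete `r`-partite
`r`-uniform subhypergraph satisfies `|A 1| ⋯ |A (r-1)| < (r+1) log₂ n`. -/
theorem whp_prefix_product_small (r : ℕ) (hr : 3 ≤ r) :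
    Filter.Tendsto (fun n : ℕ =>
      randomHypergraph n r (1/2) (by norm_num)
        {ω | ∀ A : Fin r → Finset (Fin n),
          (∀ i j, i ≠ j → Disjoint (A i) (A j)) →
          (Monotone fun i => (A i).card) →
          (∀ F : {F : Finset (Fin n) // F.card = r},
            (∀ i, ((F : Finset (Fin n)) ∩ A i).card = 1) → ω F = true) →
          ((∏ i ∈ Finset.univ.filter (fun i : Fin r => (i : ℕ) < r - 1),
              (A i).card : ℝ) < (r + 1) * Real.logb 2 n)})
      Filter.atTop (nhds 1) := by
  classical
  have hprob : ∀ n, IsProbabilityMeasure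
      (randomHypergraph n r (1/2) (by norm_num : (1/2 : ENNReal) ≤ 1)) := by
    intro n; unfold randomHypergraph; infer_instance
  -- abbreviate the bad measure
  set bad : ℕ → ENNReal := fun n =>
    randomHypergraph n r (1/2) (by norm_num)
      ({ω : {F : Finset (Fin n) // F.card = r} → Bool | ∀ A : Fin r → Finset (Fin n),
          (∀ i j, i ≠ j → Disjoint (A i) (A j)) →
          (Monotone fun i => (A i).card) →
          (∀ F : {F : Finset (Fin n) // F.card = r},
            (∀ i, ((F : Finset (Fin n)) ∩ A i).card = 1) → ω F = true) →
          ((∏ i ∈ Finset.univ.filter (fun i : Fin r => (i : ℕ) < r - 1),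
              (A i).card : ℝ) < (r + 1) * Real.logb 2 n)}ᶜ) with hbad
  have heq : ∀ n : ℕ,
      randomHypergraph n r (1/2) (by norm_num)
        {ω | ∀ A : Fin r → Finset (Fin n),
          (∀ i j, i ≠ j → Disjoint (A i) (A j)) →
          (Monotone fun i => (A i).card) →
          (∀ F : {F : Finset (Fin n) // F.card = r},
            (∀ i, ((F : Finset (Fin n)) ∩ A i).card = 1) → ω F = true) →
          ((∏ i ∈ Finset.univ.filter (fun i : Fin r => (i : ℕ) < r - 1),
              (A i).card : ℝ) < (r + 1) * Real.logb 2 n)}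
        = 1 - bad n := by
    intro n
    haveI := hprob n
    rw [hbad]
    rw [← compl_compl ({ω | ∀ A : Fin r → Finset (Fin n),
          (∀ i j, i ≠ j → Disjoint (A i) (A j)) →
          (Monotone fun i => (A i).card) →
          (∀ F : {F : Finset (Fin n) // F.card = r},
            (∀ i, ((F : Finset (Fin n)) ∩ A i).card = 1) → ω F = true) →
          ((∏ i ∈ Finset.univ.filter (fun i : Fin r => (i : ℕ) < r - 1),
              (A i).card : ℝ) < (r + 1) * Real.logb 2 n)} :
        Set ({F : Finset (Fin n) // F.card = r} → Bool))]
    exact prob_compl_eq_one_sub (Set.toFinite _).measurableSet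
  -- bad tends to 0
  have hbound : Filter.Tendsto (fun n : ℕ => (2:ENNReal)^(6*r+1) * ((n : ENNReal))⁻¹)
      Filter.atTop (nhds 0) := by
    have := ENNReal.Tendsto.const_mul (a := (2:ENNReal)^(6*r+1))
      ENNReal.tendsto_inv_nat_nhds_zero (Or.inr (ENNReal.pow_ne_top (by norm_num)))
    simpa using this
  have hev : ∀ᶠ n : ℕ in Filter.atTop, bad n ≤ (2:ENNReal)^(6*r+1) * ((n : ENNReal))⁻¹ := by
    have hlog : Filter.Tendsto (fun n : ℕ => Real.logb 2 n) Filter.atTop Filter.atTop :=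
      (Real.tendsto_logb_atTop (by norm_num)).comp tendsto_natCast_atTop_atTop
    filter_upwards [hlog.eventually_gt_atTop ((5:ℝ)^(r-1)),
      Filter.eventually_ge_atTop (2^(r+1)), Filter.eventually_ge_atTop 1] with n h1 h2 h3
    refine le_trans (main_bound r n hr h1 h2) ?_
    apply mul_le_mul_right
    have hinv1 : ((n : ENNReal))⁻¹ ≤ 1 := by
      apply ENNReal.inv_le_one.mpr
      exact_mod_cast h3
    calc (((n : ENNReal))⁻¹)^5 = ((n : ENNReal))⁻¹ * (((n : ENNReal))⁻¹)^4 := by ring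
      _ ≤ ((n : ENNReal))⁻¹ * 1 := mul_le_mul_right (pow_le_one₀ zero_le hinv1) _
      _ = ((n : ENNReal))⁻¹ := mul_one _
  have hbad0 : Filter.Tendsto bad Filter.atTop (nhds 0) :=
    tendsto_of_tendsto_of_tendsto_of_le_of_le' tendsto_const_nhds hbound
      (Filter.Eventually.of_forall (fun n => zero_le)) hev
  have hfin : Filter.Tendsto (fun n => 1 - bad n) Filter.atTop (nhds 1) := by
    have := ENNReal.Tendsto.sub (tendsto_const_nhds (x := (1:ENNReal))) hbad0
      (Or.inl ENNReal.one_ne_top)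
    simpa using this
  exact hfin.congr (fun n => (heq n).symm)
end
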